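/- arXiv:1011.3441 — 9 statements merged into one kernel-verified Lean document; each statement's English description precedes it below -/
import Mathlib

section
/- For any finite set X of strings over an alphabet and any two strings x, y in X, the prefix-lexicographic rank of y among X lies in the interval [prrank_X(x), prrank_X(x) + prcount_X(x) - 1] if and only if x is a prefix of y, where prrank_X(x) is the number of elements of X strictly preceding x in prefix-lexicographic order and prcount_X(x) is the number of elements of X having x as a prefix. -/
/-- Number of elements of `X` strictly preceding `x` in prefix-lexicographic order. -/
noncomputable def prrank {α : Type*} [LinearOrder α] (X : Set (List α)) (x : List α) : ℕ :=
  {t ∈ X | List.Lex (· < ·) t x}.ncard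

/-- Number of elements of `X` having `x` as a prefix. -/
noncomputable def prcount {α : Type*} [LinearOrder α] (X : Set (List α)) (x : List α) : ℕ :=
  {t ∈ X | x <+: t}.ncard

/-!
The strings of `X` with prefix `x` form a contiguous block in prefix-lexicographic order,
starting right after the `prrank X x` strings below `x`. Indeed, if `x < y` and `x` is not a
prefix of `y`, then `x` and `y` differ at some position inside `x`, so every extension of `x`
also lies below `y`: the whole block precedes `y`. Conversely, if `x` is a prefix of `y`, then
everything below `y` lies below `x` or in the block, and `y` itself belongs to the block.
-/

theorem List.IsPrefix.lt_of_lt_of_not_isPrefix {α : Type*} [LinearOrder α] {x y t : List α}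
    (ht : x <+: t) (hxy : x < y) (hnp : ¬x <+: y) : t < y := by
  obtain ⟨s, rfl⟩ := ht
  induction hxy with
  | nil => exact absurd List.nil_prefix hnp
  | cons _ ih => exact List.Lex.cons (ih fun hp => hnp (List.cons_prefix_cons.mpr ⟨rfl, hp⟩))
  | rel hlt => exact List.Lex.rel hlt

section PrefixRank

variable {α : Type*} [LinearOrder α] {X : Set (List α)} {x y : List α}

theorem prrank_mono (hX : X.Finite) (hxy : x ≤ y) : prrank X x ≤ prrank X y :=
  Set.ncard_le_ncard (fun _ ⟨htX, htx⟩ => ⟨htX, lt_of_lt_of_le htx hxy⟩)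
    (hX.sep _)

theorem prrank_lt_prrank (hX : X.Finite) (hy : y ∈ X) (hyx : y < x) :
    prrank X y < prrank X x :=
  Set.ncard_lt_ncard
    (ssubset_of_subset_not_subset (fun _ ⟨htX, hty⟩ => ⟨htX, lt_trans hty hyx⟩)
      fun hsub => lt_irrefl y (hsub ⟨hy, hyx⟩).2)
    (hX.sep _)

theorem prcount_pos (hX : X.Finite) (hx : x ∈ X) : 0 < prcount X x :=
  (Set.ncard_pos (hX.sep _)).mpr ⟨x, hx, List.prefix_rfl⟩

theorem prrank_add_prcount_le (hX : X.Finite) (hxy : x < y) (hnp : ¬x <+: y) :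
    prrank X x + prcount X x ≤ prrank X y := by
  have hdisj : Disjoint {t ∈ X | t < x} {t ∈ X | x <+: t} :=
    Set.disjoint_left.mpr fun _ ⟨_, htx⟩ ⟨_, hxt⟩ => hxt.le htx
  have hsub : {t ∈ X | t < x} ∪ {t ∈ X | x <+: t} ⊆ {t ∈ X | t < y} := by
    rintro t (⟨htX, htx⟩ | ⟨htX, hxt⟩)
    · exact ⟨htX, lt_trans htx hxy⟩
    · exact ⟨htX, hxt.lt_of_lt_of_not_isPrefix hxy hnp⟩
  calc prrank X x + prcount X x
      = ({t ∈ X | t < x} ∪ {t ∈ X | x <+: t}).ncard :=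
        (Set.ncard_union_eq hdisj (hX.sep _) (hX.sep _)).symm
    _ ≤ prrank X y := Set.ncard_le_ncard hsub (hX.sep _)

theorem prrank_lt_prrank_add_prcount (hX : X.Finite) (hy : y ∈ X) (hxy : x <+: y) :
    prrank X y < prrank X x + prcount X x := by
  have hsub : insert y {t ∈ X | t < y} ⊆ {t ∈ X | t < x} ∪ {t ∈ X | x <+: t} := by
    rintro t (rfl | ⟨htX, hty⟩)
    · exact Or.inr ⟨hy, hxy⟩
    rcases lt_trichotomy t x with htx | rfl | hxt
    · exact Or.inl ⟨htX, htx⟩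
    · exact Or.inr ⟨htX, List.prefix_rfl⟩
    by_cases hxt' : x <+: t
    · exact Or.inr ⟨htX, hxt'⟩
    · exact absurd (hxy.lt_of_lt_of_not_isPrefix hxt hxt') (lt_asymm hty)
  calc prrank X y + 1
      = (insert y {t ∈ X | t < y}).ncard :=
        (Set.ncard_insert_of_notMem (fun h => lt_irrefl y h.2) (hX.sep _)).symm
    _ ≤ ({t ∈ X | t < x} ∪ {t ∈ X | x <+: t}).ncard :=
        Set.ncard_le_ncard hsub ((hX.sep _).union (hX.sep _))
    _ ≤ prrank X x + prcount X x := Set.ncard_union_le _ _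

end PrefixRank

theorem prefix_rank_interval {α : Type*} [LinearOrder α] (X : Set (List α)) (hX : X.Finite)
    (x y : List α) (hx : x ∈ X) (hy : y ∈ X) :
    (prrank X x ≤ prrank X y ∧ prrank X y ≤ prrank X x + prcount X x - 1) ↔ x <+: y := by
  constructor
  · rintro ⟨hle, hge⟩
    by_contra hnp
    rcases lt_trichotomy y x with hyx | rfl | hxy
    · exact (prrank_lt_prrank hX hy hyx).not_ge hle
    · exact hnp List.prefix_rfl
    · have hblock := prrank_add_prcount_le hX hxy hnp
      have hpos := prcount_pos hX hx
      omega
  · intro hxy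
    have hlt := prrank_lt_prrank_add_prcount hX hy hxy
    -- core's `List.IsPrefix.le` concludes `¬ y < x`, not Mathlib's `x ≤ y`
    exact ⟨prrank_mono hX (not_lt.mp hxy.le), by omega⟩
end

section
/- For any finite set X of strings and any two strings x, y in X, the suffix-lexicographic rank of y among X lies in [surank_X(x), surank_X(x) + sucount_X(x) - 1] if and only if x is a suffix of y. -/
/-- Number of elements of `X` strictly preceding `x` in suffix-lexicographic order
(lexicographic order on the reversed strings). -/
noncomputable def surank {α : Type*} [LinearOrder α] (X : Set (List α)) (x : List α) : ℕ :=
  {t ∈ X | List.Lex (· < ·) t.reverse x.reverse}.ncard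

/-- Number of elements of `X` having `x` as a suffix. -/
noncomputable def sucount {α : Type*} [LinearOrder α] (X : Set (List α)) (x : List α) : ℕ :=
  {t ∈ X | x <:+ t}.ncard

/-!
Reversal turns suffix-lexicographic order into lexicographic order and "`x` is a suffix of `t`"
into "`x.reverse` is a prefix of `t.reverse`". The lists with a given prefix `p` form an interval
of the lexicographic order whose least element is `p`, and in a finite set ranked by a linear
order, the members of an interval with least element `m` occupy exactly the ranks from
`rank m` to `rank m + size - 1`: everything below `m` precedes the whole interval, and everything
above `m` outside the interval follows it.
-/

namespace List

variable {α : Type*} [LinearOrder α]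

theorem IsPrefix.of_le_of_le {p l : List α} (hp : p <+: l) :
    ∀ {c : List α}, p ≤ c → c ≤ l → p <+: c := by
  induction p generalizing l with
  | nil => exact fun _ _ => nil_prefix
  | cons a p ih =>
    obtain ⟨t, rfl⟩ := hp
    rintro (_ | ⟨b, c⟩) hpc hcl
    · exact absurd hpc (not_le.mpr (nil_lt_cons a p))
    · rw [← not_lt, cons_lt_cons_iff] at hpc
      rw [← not_lt, cons_append, cons_lt_cons_iff] at hcl
      obtain rfl : a = b :=
        le_antisymm (not_lt.mp fun h => hpc (.inl h)) (not_lt.mp fun h => hcl (.inl h))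
      exact cons_prefix_cons.mpr ⟨rfl, ih (prefix_append p t)
        (not_lt.mp fun h => hpc (.inr ⟨rfl, h⟩)) (not_lt.mp fun h => hcl (.inr ⟨rfl, h⟩))⟩

end List

section RankBy

variable {γ β : Type*} [LinearOrder β]

noncomputable def rankBy (f : γ → β) (S : Set γ) (z : γ) : ℕ :=
  {s ∈ S | f s < f z}.ncard

variable {f : γ → β} {S I : Set γ} {m y : γ}

theorem rankBy_mono (hS : S.Finite) {a b : γ} (h : f a ≤ f b) : rankBy f S a ≤ rankBy f S b :=
  Set.ncard_le_ncard (fun _ hs => ⟨hs.1, hs.2.trans_le h⟩) (hS.subset (Set.sep_subset _ _))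

theorem rankBy_lt_rankBy (hS : S.Finite) {a b : γ} (hb : b ∈ S) (h : f b < f a) :
    rankBy f S b < rankBy f S a := by
  refine Set.ncard_lt_ncard ?_ (hS.subset (Set.sep_subset _ _))
  have hsub : {s ∈ S | f s < f b} ⊆ {s ∈ S | f s < f a} := fun _ hs => ⟨hs.1, hs.2.trans h⟩
  exact (Set.ssubset_iff_of_subset hsub).mpr ⟨b, ⟨hb, h⟩, fun hb' => lt_irrefl _ hb'.2⟩

theorem rankBy_add_ncard (hS : S.Finite) (hIS : I ⊆ S) (hmin : ∀ a ∈ I, f m ≤ f a) :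
    rankBy f S m + I.ncard = ({s ∈ S | f s < f m} ∪ I).ncard := by
  refine (Set.ncard_union_eq ?_ (hS.subset (Set.sep_subset _ _)) (hS.subset hIS)).symm
  exact Set.disjoint_left.mpr fun a ha haI => (hmin a haI).not_gt ha.2

variable (hS : S.Finite) (hIS : I ⊆ S) (hmin : ∀ a ∈ I, f m ≤ f a)
  (hconv : ∀ a ∈ I, ∀ c ∈ S, f m ≤ f c → f c ≤ f a → c ∈ I)
include hS hIS hmin hconv

theorem rankBy_lt_rankBy_add_ncard (hy : y ∈ I) : rankBy f S y < rankBy f S m + I.ncard := by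
  rw [rankBy_add_ncard hS hIS hmin]
  refine Set.ncard_lt_ncard ?_ ((hS.subset (Set.sep_subset _ _)).union (hS.subset hIS))
  refine Set.ssubset_iff_subset_ne.mpr ⟨fun s hs => ?_, fun h => ?_⟩
  · rcases lt_or_ge (f s) (f m) with hsm | hms
    · exact .inl ⟨hs.1, hsm⟩
    · exact .inr (hconv y hy s hs.1 hms hs.2.le)
  · have : y ∈ {s ∈ S | f s < f y} := h ▸ .inr hy
    exact lt_irrefl _ this.2

theorem rankBy_add_ncard_le (hy : y ∈ S) (hmy : f m ≤ f y) (hyI : y ∉ I) :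
    rankBy f S m + I.ncard ≤ rankBy f S y := by
  rw [rankBy_add_ncard hS hIS hmin]
  refine Set.ncard_le_ncard ?_ (hS.subset (Set.sep_subset _ _))
  rintro s (hs | hs)
  · exact ⟨hs.1, hs.2.trans_le hmy⟩
  · exact ⟨hIS hs, lt_of_not_ge fun hys => hyI (hconv s hs y hy hmy hys)⟩

theorem rankBy_mem_Icc_iff (hm : m ∈ I) (hy : y ∈ S) :
    (rankBy f S m ≤ rankBy f S y ∧ rankBy f S y ≤ rankBy f S m + I.ncard - 1) ↔ y ∈ I := by
  refine ⟨fun ⟨hmy, hym⟩ => ?_, fun hyI => ⟨rankBy_mono hS (hmin y hyI), ?_⟩⟩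
  · by_contra hyI
    rcases lt_or_ge (f y) (f m) with hlt | hle
    · exact (rankBy_lt_rankBy hS hy hlt).not_ge hmy
    · have hI : 0 < I.ncard := (Set.ncard_pos (hS.subset hIS)).mpr ⟨m, hm⟩
      have := rankBy_add_ncard_le hS hIS hmin hconv hy hle hyI
      omega
  · have := rankBy_lt_rankBy_add_ncard hS hIS hmin hconv hyI
    omega

end RankBy

theorem suffix_rank_interval {α : Type*} [LinearOrder α] (X : Set (List α)) (hX : X.Finite)
    (x y : List α) (hx : x ∈ X) (hy : y ∈ X) :
    (surank X x ≤ surank X y ∧ surank X y ≤ surank X x + sucount X x - 1) ↔ x <:+ y := by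
  have hmin : ∀ t ∈ {t ∈ X | x <:+ t}, x.reverse ≤ t.reverse := fun t ht =>
    not_lt.mp (List.reverse_prefix.mpr ht.2).le
  have hconv : ∀ a ∈ {t ∈ X | x <:+ t}, ∀ c ∈ X, x.reverse ≤ c.reverse → c.reverse ≤ a.reverse →
      c ∈ {t ∈ X | x <:+ t} := fun a ha c hc hxc hca =>
    ⟨hc, List.reverse_prefix.mp ((List.reverse_prefix.mpr ha.2).of_le_of_le hxc hca)⟩
  -- `surank X` is `rankBy List.reverse X` and `sucount X x` is `{t ∈ X | x <:+ t}.ncard` by `rfl`.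
  exact (rankBy_mem_Icc_iff hX (Set.sep_subset _ _) hmin hconv ⟨hx, List.suffix_refl x⟩ hy).trans
    (and_iff_right hy)
end

section
/- If a string q occurs exactly i times as a substring of a string W, and a string p contains exactly i' occurrences of q as a substring with i' ≥ 1, then p occurs at most i - i' + 1 times as a substring of W. -/
/-!
If `p` occurs in `W` at position `j` and `q` occurs in `p` at position `k`, then `q` occurs in `W`
at position `j + k`. Hence the sumset `occs p W + occs q p` lies inside `occs q W`, and the
Cauchy–Davenport inequality `|A + B| ≥ |A| + |B| - 1` for finite sets of naturals gives the bound.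
-/

open scoped Pointwise

/-- The set of occurrence (starting) positions of `s` in `t`. -/
def occs {α : Type*} [DecidableEq α] (s t : List α) : Finset ℕ :=
  (Finset.range (t.length + 1)).filter (fun j => s <+: t.drop j)

section

variable {α : Type*} [DecidableEq α] {s t u : List α}

theorem add_mem_occs {j k : ℕ} (hj : j ∈ occs t u) (hk : k ∈ occs s t) : j + k ∈ occs s u := by
  simp only [occs, Finset.mem_filter, Finset.mem_range] at hj hk ⊢
  obtain ⟨hj_le, htu⟩ := hj
  obtain ⟨hk_le, hst⟩ := hk
  have ht_le : t.length ≤ u.length - j := by simpa using htu.length_le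
  refine ⟨by omega, ?_⟩
  simpa [List.drop_drop] using hst.trans (htu.drop k)

theorem occs_add_occs_subset : occs t u + occs s t ⊆ occs s u := by
  rintro _ hx
  obtain ⟨j, hj, k, hk, rfl⟩ := Finset.mem_add.mp hx
  exact add_mem_occs hj hk

theorem card_occs_le_card_occs_sub_add_one (hs : (occs s t).Nonempty) :
    (occs t u).card ≤ (occs s u).card - (occs s t).card + 1 := by
  rcases (occs t u).eq_empty_or_nonempty with h | ht
  · simp [h]
  have hsum := cauchy_davenport_add_of_linearOrder_isCancelAdd ht hs
  have hsub := Finset.card_le_card (occs_add_occs_subset (s := s) (t := t) (u := u))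
  have hs_pos := hs.card_pos
  omega

end

theorem occ_count_bound {α : Type*} [DecidableEq α] (q p W : List α) (i i' : ℕ)
    (hW : (occs q W).card = i) (hp : (occs q p).card = i') (hi' : 1 ≤ i') :
    (occs p W).card ≤ i - i' + 1 := by
  subst hW hp
  exact card_occs_le_card_occs_sub_add_one (Finset.card_pos.mp hi')
end

section
/- Let p be a string of length m and let h = ⌊m/3⌋. If a factor q of p of length m - h occurs at least twice in p, then the shortest period of q is at most |q|/2. -/
/-!
Two occurrences of `q` in `p` at positions `i < j` make `j - i` a period of `q`, as long as the
shift does not exceed `|q|`. Both occurrences fit in `p`, so `j - i ≤ |p| - |q| = ⌊m/3⌋`, and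
`|q| = m - ⌊m/3⌋ ≥ 2⌊m/3⌋`.
-/

/-- `g` is a period of the string `q`. -/
def isPeriod {α : Type*} (q : List α) (g : ℕ) : Prop :=
  0 < g ∧ g ≤ q.length ∧ ∀ a, a + g < q.length → q[a]? = q[a + g]?

section Occurrences

variable {α : Type*} [DecidableEq α] {p q : List α} {i j : ℕ}

lemma add_length_le_of_mem_occs (hi : i ∈ occs q p) : i + q.length ≤ p.length := by
  simp only [occs, Finset.mem_filter, Finset.mem_range] at hi
  have := hi.2.length_le
  rw [List.length_drop] at this
  omega

lemma getElem?_eq_of_mem_occs (hi : i ∈ occs q p) {a : ℕ} (ha : a < q.length) :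
    q[a]? = p[i + a]? := by
  rw [← List.getElem?_drop, List.getElem?_eq_getElem ha,
    (Finset.mem_filter.mp hi).2.getElem ha, List.getElem?_eq_getElem]

lemma isPeriod_sub_of_mem_occs (hi : i ∈ occs q p) (hj : j ∈ occs q p) (hij : i < j)
    (hshift : j - i ≤ q.length) : isPeriod q (j - i) := by
  refine ⟨Nat.sub_pos_of_lt hij, hshift, fun a ha => ?_⟩
  rw [getElem?_eq_of_mem_occs hj (by omega), getElem?_eq_of_mem_occs hi ha]
  congr 1
  omega

lemma exists_isPeriod_le_of_two_le_card_occs (hocc : 2 ≤ (occs q p).card)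
    (hlen : p.length - q.length ≤ q.length) :
    ∃ g, isPeriod q g ∧ g ≤ p.length - q.length := by
  have hshift : ∀ {i j}, i ∈ occs q p → j ∈ occs q p → j - i ≤ p.length - q.length :=
    fun _ hj => by have := add_length_le_of_mem_occs hj; omega
  obtain ⟨i, hi, j, hj, hne⟩ := Finset.one_lt_card.mp hocc
  rcases hne.lt_or_gt with hij | hji
  · exact ⟨j - i, isPeriod_sub_of_mem_occs hi hj hij (hshift hi hj |>.trans hlen), hshift hi hj⟩
  · exact ⟨i - j, isPeriod_sub_of_mem_occs hj hi hji (hshift hj hi |>.trans hlen), hshift hj hi⟩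

end Occurrences

theorem shortest_period_of_repeated_factor_general {α : Type*} [DecidableEq α]
    (p q : List α) (m : ℕ) (hm : p.length = m)
    (hql : q.length = m - m / 3) (hocc : 2 ≤ (occs q p).card) :
    sInf {g | isPeriod q g} ≤ q.length / 2 := by
  obtain ⟨g, hg, hgle⟩ :=
    exists_isPeriod_le_of_two_le_card_occs hocc (by rw [hm, hql]; omega)
  calc sInf {g | isPeriod q g} ≤ g := Nat.sInf_le hg
    _ ≤ q.length / 2 := by rw [hm, hql] at hgle; omega

theorem shortest_period_of_repeated_factor {α : Type*} [DecidableEq α]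
    (p q : List α) (m : ℕ) (hm : p.length = m) (hq : q <:+: p)
    (hql : q.length = m - m / 3) (hocc : 2 ≤ (occs q p).card) :
    sInf {g | isPeriod q g} ≤ q.length / 2 :=
  shortest_period_of_repeated_factor_general p q m hm hql hocc
end

section
/- If a string q has a period g with g ≤ |q|/2, and g₀ is the shortest period of q, then every period g' of q with g' ≤ |q|/2 is a multiple of g₀. -/
namespace isPeriod

variable {α : Type*} {q : List α} {p r : ℕ}

theorem sub (hp : isPeriod q p) (hr : isPeriod q r) (hrp : r < p) (hpr : p + r ≤ q.length) :
    isPeriod q (p - r) := by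
  obtain ⟨hp0, hpn, hpe⟩ := hp
  obtain ⟨hr0, hrn, hre⟩ := hr
  refine ⟨by omega, by omega, fun a ha => ?_⟩
  by_cases hap : a + p < q.length
  · rw [hpe a hap, show a + (p - r) = a + p - r by omega, hre (a + p - r) (by omega)]
    congr 1
    omega
  · -- here `r ≤ a`, since `p + r ≤ |q|`
    have back := hre (a - r) (by omega)
    have forth := hpe (a - r) (by omega)
    rw [show a - r + r = a by omega] at back
    rw [show a - r + p = a + (p - r) by omega] at forth
    rw [← back, forth]

theorem gcd (hp : isPeriod q p) (hr : isPeriod q r) (hpr : p + r ≤ q.length) :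
    isPeriod q (p.gcd r) := by
  induction hn : p + r using Nat.strong_induction_on generalizing p r with
  | _ n ih =>
    rcases lt_trichotomy p r with hlt | rfl | hgt
    · rw [Nat.gcd_comm, ← Nat.gcd_sub_self_left hlt.le]
      exact ih _ (by have := hp.1; omega) (hr.sub hp hlt (by omega)) hp (by omega) rfl
    · rwa [Nat.gcd_self]
    · rw [← Nat.gcd_sub_self_left hgt.le]
      exact ih _ (by have := hr.1; omega) (hp.sub hr hgt (by omega)) hr (by omega) rfl

theorem dvd_of_isLeast {g₀ : ℕ} (hg₀ : IsLeast {g | isPeriod q g} g₀) (hp : isPeriod q p)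
    (hpg₀ : g₀ + p ≤ q.length) : g₀ ∣ p := by
  have hgcd : isPeriod q (g₀.gcd p) := hg₀.1.gcd hp hpg₀
  exact Nat.gcd_eq_left_iff_dvd.mp <|
    le_antisymm (Nat.gcd_le_left _ hg₀.1.1) (hg₀.2 hgcd)

end isPeriod

theorem small_periods_multiple_of_shortest_general {α : Type*} (q : List α) (g₀ : ℕ)
    (hg₀ : isPeriod q g₀) (hmin : ∀ g', isPeriod q g' → g₀ ≤ g') :
    ∀ g', isPeriod q g' → 2 * g' ≤ q.length → g₀ ∣ g' := by
  intro g' hg' hg'2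
  exact isPeriod.dvd_of_isLeast ⟨hg₀, hmin⟩ hg' (by have := hmin g' hg'; omega)

theorem small_periods_multiple_of_shortest {α : Type*} (q : List α) (g g₀ : ℕ)
    (hg : isPeriod q g) (hg2 : 2 * g ≤ q.length)
    (hg₀ : isPeriod q g₀) (hmin : ∀ g', isPeriod q g' → g₀ ≤ g') :
    ∀ g', isPeriod q g' → 2 * g' ≤ q.length → g₀ ∣ g' :=
  small_periods_multiple_of_shortest_general q g₀ hg₀ hmin
end

section
/- Let p be a string containing exactly c_p ≥ 1 occurrences of a string q, and let W be a string containing exactly c_W occurrences of q. If c_W < c_p then p does not occur in W; if c_W ≥ c_p then p occurs at most c_W - c_p + 1 times in W. -/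
open Finset Pointwise

section

variable {α : Type*} [DecidableEq α]

lemma mem_occs {s t : List α} {i : ℕ} : i ∈ occs s t ↔ i ≤ t.length ∧ s <+: t.drop i := by
  simp [occs]

lemma add_mem_occs_s9 {p q W : List α} {i j : ℕ} (hi : i ∈ occs p W) (hj : j ∈ occs q p) :
    i + j ∈ occs q W := by
  obtain ⟨hiW, r, hr⟩ := mem_occs.mp hi
  obtain ⟨hjp, hqp⟩ := mem_occs.mp hj
  have hlen : W.length - i = p.length + r.length := by simpa using (congrArg List.length hr).symm
  have hdrop : W.drop (i + j) = p.drop j ++ r := by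
    rw [← List.drop_drop, ← hr, List.drop_append_of_le_length hjp]
  refine mem_occs.mpr ⟨by omega, ?_⟩
  rw [hdrop]
  exact hqp.trans (List.prefix_append _ _)

lemma occs_add_occs_subset_s9 (p q W : List α) : occs p W + occs q p ⊆ occs q W :=
  add_subset_iff.mpr fun _ hi _ hj => add_mem_occs_s9 hi hj

lemma card_occs_add_card_occs_le {p q W : List α} (hpW : (occs p W).Nonempty)
    (hqp : (occs q p).Nonempty) : #(occs p W) + #(occs q p) - 1 ≤ #(occs q W) :=
  (cauchy_davenport_add_of_linearOrder_isCancelAdd hpW hqp).trans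
    (card_le_card (occs_add_occs_subset_s9 p q W))

end

theorem pattern_occurrence_count_bounds {α : Type*} [DecidableEq α]
    (p q W : List α) (cp cW : ℕ)
    (hp : (occs q p).card = cp) (hcp : 1 ≤ cp) (hW : (occs q W).card = cW) :
    (cW < cp → (occs p W).card = 0) ∧ (cp ≤ cW → (occs p W).card ≤ cW - cp + 1) := by
  have hqp : (occs q p).Nonempty := card_pos.mp (by omega)
  have hbound : #(occs p W) + cp - 1 ≤ cW ∨ #(occs p W) = 0 := by
    rcases (occs p W).eq_empty_or_nonempty with hempty | hpW
    · exact .inr (by simp [hempty])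
    · exact .inl (hp ▸ hW ▸ card_occs_add_card_occs_le hpW hqp)
  omega
end

section
/- Let P be a finite set of strings closed under taking the longest proper suffix belonging to P (as in the set of prefixes of patterns in an Aho–Corasick automaton), let p be a string and q a string. If x is the longest element of P that is a suffix of p·q and |x| ≥ |q|, then x can be uniquely written as x = p'·q with p' a suffix of p, and for any other suffix p'' of p with p''·q ∈ P, we have |p''| ≤ |p'|. -/
theorem longest_suffix_decomposition {α : Type*} (P : Finset (List α))
    (p q x : List α) (hxP : x ∈ P) (hxsuf : x <:+ p ++ q)
    (hxmax : ∀ s ∈ P, s <:+ p ++ q → s.length ≤ x.length)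
    (hxq : q.length ≤ x.length) :
    ∃! p' : List α, x = p' ++ q ∧ p' <:+ p ∧
      ∀ p'' : List α, p'' <:+ p → p'' ++ q ∈ P → p''.length ≤ p'.length := by
  have hqx : q <:+ x := by
    rcases List.suffix_or_suffix_of_suffix (⟨p, rfl⟩ : q <:+ p ++ q) hxsuf with h | h
    · exact h
    · exact (h.eq_of_length (le_antisymm h.length_le hxq)) ▸ List.suffix_refl q
  obtain ⟨p', hp'⟩ := hqx
  obtain ⟨t, ht⟩ := hxsuf
  have htp : t ++ p' = p := by
    have : (t ++ p') ++ q = p ++ q := by rw [List.append_assoc, hp', ht]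
    exact List.append_cancel_right this
  refine ⟨p', ⟨hp'.symm, ⟨t, htp⟩, ?_⟩, ?_⟩
  · intro p'' hsuf hmem
    obtain ⟨u, hu⟩ := hsuf
    have : p'' ++ q <:+ p ++ q := ⟨u, by rw [← List.append_assoc, hu]⟩
    have := hxmax _ hmem this
    simp only [← hp', List.length_append] at this
    omega
  · rintro y ⟨hy, -, -⟩
    exact (List.append_cancel_right (hy ▸ hp')).symm
end

section
/- Let W = q'·q·q'' where q = (uv)^t u has shortest period g = |uv| with t ≥ 2 and |v| ≥ 1. Let i' be the largest integer such that (uv)^{i'} is a suffix of q', and i'' the largest integer such that (vu)^{i''} is a prefix of q''. If an occurrence of q in W starts at position α with α < |q'| and |q'| - α ≤ |q|/2, then |q'| - α is a multiple of g and (uv)^{(|q'|-α)/g} is a suffix of q', hence (|q'| - α)/g ≤ i'. -/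
/-- `k` concatenated copies of `s`. -/
def pow {α : Type*} (s : List α) (k : ℕ) : List α :=
  (List.replicate k s).flatten

/-!
An occurrence of `q` at position `α`, `d = |q'| - α` letters before the end of `q'`, overlaps
the copy of `q` following `q'` with a shift of `d`, so `d` is a period of `q`. As `g` is the
shortest period, `g ≤ d`, hence `g + d ≤ 2d ≤ |q|` and the periodicity lemma makes `gcd g d` a
period too; minimality forces `g ∣ d`. The overhanging part of the occurrence is then
`q.take d = (uv)^(d/g)`, a suffix of `q'`, and the maximality of `i'` bounds `d / g`.
-/

section Pow

variable {α : Type*}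

theorem pow_length (s : List α) (k : ℕ) : (pow s k).length = k * s.length := by
  simp [pow]

theorem pow_add_eq_append (s : List α) (m n : ℕ) : pow s (m + n) = pow s m ++ pow s n := by
  simp only [pow, List.replicate_add, List.flatten_append]

theorem pow_suffix_pow_of_le (s : List α) {m n : ℕ} (h : m ≤ n) : pow s m <:+ pow s n :=
  ⟨pow s (n - m), by rw [← pow_add_eq_append, Nat.sub_add_cancel h]⟩

theorem take_pow_append {s : List α} {k t : ℕ} (r : List α) (hk : k ≤ t) :
    (pow s t ++ r).take (k * s.length) = pow s k := by
  rw [← Nat.add_sub_cancel' hk, pow_add_eq_append, List.append_assoc,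
    List.take_left' (pow_length s k)]

end Pow

section Period

variable {α : Type*} {w : List α}

theorem isPeriod_sub {p q : ℕ} (hp : isPeriod w p) (hq : isPeriod w q) (hpq : p < q)
    (hlen : p + q ≤ w.length) : isPeriod w (q - p) := by
  refine ⟨by omega, by omega, fun b hb => ?_⟩
  by_cases hbq : b + q < w.length
  · rw [hq.2.2 b hbq, hp.2.2 (b + (q - p)) (by omega)]
    congr 1
    omega
  · have h1 := hp.2.2 (b - p) (by omega)
    have h2 := hq.2.2 (b - p) (by omega)
    rw [Nat.sub_add_cancel (by omega)] at h1
    rw [show b - p + q = b + (q - p) by omega] at h2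
    rw [← h1, h2]

/-- The periodicity lemma in the weak form of Fine and Wilf. -/
theorem isPeriod_gcd {p q : ℕ} (hp : isPeriod w p) (hq : isPeriod w q)
    (hlen : p + q ≤ w.length) : isPeriod w (Nat.gcd p q) := by
  rcases lt_trichotomy p q with hpq | rfl | hqp
  · have := isPeriod_gcd hp (isPeriod_sub hp hq hpq hlen) (by omega)
    rwa [Nat.gcd_sub_self_right hpq.le] at this
  · rwa [Nat.gcd_self]
  · have := isPeriod_gcd (isPeriod_sub hq hp hqp (by omega)) hq (by omega)
    rwa [Nat.gcd_comm, Nat.gcd_sub_self_right hqp.le, Nat.gcd_comm] at this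
termination_by p + q
decreasing_by
  all_goals have := hp.1; have := hq.1; omega

theorem dvd_of_isPeriod_of_two_mul_le {p q : ℕ} (hp : isPeriod w p)
    (hmin : ∀ p', isPeriod w p' → p ≤ p') (hq : isPeriod w q) (hlen : 2 * q ≤ w.length) :
    p ∣ q := by
  have hpq : p ≤ q := hmin q hq
  have hgcd : Nat.gcd p q = p :=
    le_antisymm (Nat.gcd_le_left q hp.1) (hmin _ (isPeriod_gcd hp hq (by omega)))
  exact hgcd ▸ Nat.gcd_dvd_right p q

theorem isPeriod_of_drop_prefix {y : List α} {p : ℕ} (h0 : 0 < p) (hp : p ≤ w.length)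
    (h : w.drop p <+: w ++ y) : isPeriod w p := by
  refine ⟨h0, hp, fun b hb => ?_⟩
  have hdrop : w.drop p = w.take (w.length - p) := by
    have := List.prefix_iff_eq_take.mp h
    rwa [List.length_drop, List.take_append_of_le_length (by omega)] at this
  have hb := congrArg (·[b]?) hdrop
  simp only [List.getElem?_drop, List.getElem?_take_of_lt (show b < w.length - p by omega)] at hb
  rw [← hb, Nat.add_comm]

end Period

theorem take_eq_drop_and_drop_prefix_of_occurrence {α : Type*} {x q y : List α} {a : ℕ}
    (hocc : q <+: (x ++ q ++ y).drop a) (ha : a ≤ x.length) (hd : x.length - a ≤ q.length) :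
    q.take (x.length - a) = x.drop a ∧ q.drop (x.length - a) <+: q ++ y := by
  rw [List.append_assoc, List.drop_append_of_le_length ha] at hocc
  have htake : q.take (x.length - a) = x.drop a := by
    rw [List.prefix_iff_eq_take.mp hocc, List.take_take, min_eq_left hd,
      List.take_left' (List.length_drop ..)]
  refine ⟨htake, (List.prefix_append_right_inj (x.drop a)).mp ?_⟩
  rw [← htake] at hocc ⊢
  rwa [List.take_append_drop]

theorem left_occurrence_in_run_general {α : Type*} (u v q' q'' W q : List α) (g t i' a : ℕ)
    (hq : q = pow (u ++ v) t ++ u) (hg : g = (u ++ v).length)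
    (hper : isPeriod q g) (hmin : ∀ g'', isPeriod q g'' → g ≤ g'')
    (hW : W = q' ++ q ++ q'')
    (hi'max : ¬ pow (u ++ v) (i' + 1) <:+ q')
    (hocc : q <+: W.drop a) (ha : a < q'.length)
    (hhalf : 2 * (q'.length - a) ≤ q.length) :
    g ∣ (q'.length - a) ∧ pow (u ++ v) ((q'.length - a) / g) <:+ q' ∧
      (q'.length - a) / g ≤ i' := by
  set d := q'.length - a
  subst hW
  obtain ⟨htake, hshift⟩ :=
    take_eq_drop_and_drop_prefix_of_occurrence hocc ha.le (by omega)
  have hperd : isPeriod q d := isPeriod_of_drop_prefix (by omega) (by omega) hshift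
  have hgd : g ∣ d := dvd_of_isPeriod_of_two_mul_le hper hmin hperd hhalf
  have hkd : d / g * g = d := Nat.div_mul_cancel hgd
  have hkt : d / g ≤ t := by
    have hql : q.length = t * g + u.length := by rw [hq, List.length_append, pow_length, hg]
    have hug : u.length ≤ g := by rw [hg, List.length_append]; omega
    have : d / g * g < (t + 1) * g := by rw [hkd, add_mul]; omega
    exact Nat.lt_succ_iff.mp (Nat.lt_of_mul_lt_mul_right this)
  have hsuf : pow (u ++ v) (d / g) <:+ q' := by
    rw [← take_pow_append u hkt, ← hg, hkd, ← hq, htake]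
    exact List.drop_suffix a q'
  refine ⟨hgd, hsuf, ?_⟩
  by_contra! hlt
  exact hi'max ((pow_suffix_pow_of_le (u ++ v) hlt).trans hsuf)

theorem left_occurrence_in_run {α : Type*} (u v q' q'' W q : List α) (g t i' i'' a : ℕ)
    (hq : q = pow (u ++ v) t ++ u) (hg : g = (u ++ v).length)
    (ht : 2 ≤ t) (hv : v ≠ [])
    (hper : isPeriod q g) (hmin : ∀ g'', isPeriod q g'' → g ≤ g'')
    (hW : W = q' ++ q ++ q'')
    (hi' : pow (u ++ v) i' <:+ q') (hi'max : ¬ pow (u ++ v) (i' + 1) <:+ q')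
    (hi'' : pow (v ++ u) i'' <+: q'') (hi''max : ¬ pow (v ++ u) (i'' + 1) <+: q'')
    (hocc : q <+: W.drop a) (ha : a < q'.length)
    (hhalf : 2 * (q'.length - a) ≤ q.length) :
    g ∣ (q'.length - a) ∧ pow (u ++ v) ((q'.length - a) / g) <:+ q' ∧
      (q'.length - a) / g ≤ i' :=
  left_occurrence_in_run_general u v q' q'' W q g t i' a hq hg hper hmin hW hi'max hocc ha hhalf
end

section
/- Let q be a string with shortest period g ≤ |q|/2, written q = (uv)^t u with |uv| = g, t ≥ 2, |v| ≥ 1. Then for any k ≥ t, the string (uv)^k u contains exactly k - t + 1 occurrences of q, at positions 0, g, 2g, ..., (k-t)g. -/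
/-!
The run `(uv)^k u` visibly contains `q = (uv)^t u` at every position `i g` with `i ≤ k - t`,
and no occurrence can start after `(k - t) g`. Two occurrences of `q` at distance `d ≤ |q|`
make `d` a period of `q`; so an occurrence at `j` with `g ∤ j`, compared with the occurrence
at `⌊j / g⌋ g`, would give a period `j mod g < g`, contradicting the minimality of `g`.
-/

namespace Word

variable {α : Type*}

theorem pow_succ (s : List α) (n : ℕ) : pow s (n + 1) = s ++ pow s n := by
  simp only [pow, List.replicate_succ, List.flatten_cons]

theorem pow_add (s : List α) (m n : ℕ) : pow s (m + n) = pow s m ++ pow s n := by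
  simp only [pow, List.replicate_add, List.flatten_append]

theorem length_pow (s : List α) (k : ℕ) : (pow s k).length = k * s.length := by
  induction k with
  | zero => simp [pow]
  | succ n ih => rw [pow_succ, List.length_append, ih, Nat.succ_mul, Nat.add_comm]

theorem prefix_pow_append (u v : List α) (m : ℕ) : u <+: pow (u ++ v) m ++ u := by
  cases m with
  | zero => simp [pow]
  | succ n =>
    rw [pow_succ, List.append_assoc, List.append_assoc]
    exact List.prefix_append u _

theorem prefix_drop_mul_length_pow (u v : List α) {t k i : ℕ} (h : i + t ≤ k) :
    pow (u ++ v) t ++ u <+: (pow (u ++ v) k ++ u).drop (i * (u ++ v).length) := by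
  obtain ⟨m, rfl⟩ := Nat.exists_eq_add_of_le h
  rw [pow_add, pow_add, List.append_assoc, List.append_assoc, List.drop_left' (length_pow _ _)]
  exact (List.prefix_append_right_inj _).2 (prefix_pow_append u v m)

theorem getElem?_eq_of_prefix_drop {q W : List α} {i a : ℕ} (h : q <+: W.drop i)
    (ha : a < q.length) : q[a]? = W[i + a]? := by
  rw [← List.getElem?_drop, List.prefix_iff_getElem?.1 h a ha, List.getElem?_eq_getElem ha]

theorem isPeriod_sub_of_prefix_drop {q W : List α} {i j : ℕ} (hi : q <+: W.drop i)
    (hj : q <+: W.drop j) (hij : i < j) (hji : j ≤ i + q.length) : isPeriod q (j - i) := by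
  refine ⟨by omega, by omega, fun a ha => ?_⟩
  rw [getElem?_eq_of_prefix_drop hj (by omega), getElem?_eq_of_prefix_drop hi ha]
  congr 1
  omega

theorem eq_of_prefix_drop_of_lt_add {q W : List α} {g i j : ℕ}
    (hmin : ∀ g', isPeriod q g' → g ≤ g') (hg : g ≤ q.length)
    (hi : q <+: W.drop i) (hj : q <+: W.drop j) (hij : i ≤ j) (hji : j < i + g) : i = j := by
  by_contra hne
  have := hmin _ (isPeriod_sub_of_prefix_drop hi hj (by omega) (by omega))
  omega

end Word

open Word in
theorem occurrences_in_run_general {α : Type*} [DecidableEq α] (u v q : List α) (g t k : ℕ)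
    (hq : q = pow (u ++ v) t ++ u) (hg : g = (u ++ v).length)
    (hper : isPeriod q g) (hmin : ∀ g', isPeriod q g' → g ≤ g')
    (hk : t ≤ k) :
    occs q (pow (u ++ v) k ++ u) = (Finset.range (k - t + 1)).image (· * g) := by
  obtain ⟨m, rfl⟩ := Nat.exists_eq_add_of_le hk
  rw [Nat.add_sub_cancel_left]
  have hocc : ∀ i ≤ m, q <+: (pow (u ++ v) (t + m) ++ u).drop (i * g) := fun i hi => by
    rw [hq, hg]
    exact prefix_drop_mul_length_pow u v (by omega)
  have hlen : (pow (u ++ v) (t + m) ++ u).length = m * g + q.length := by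
    simp only [hq, hg, List.length_append, length_pow]
    ring
  ext j
  simp only [occs, Finset.mem_filter, Finset.mem_range, Finset.mem_image]
  constructor
  · rintro ⟨hjW, hj⟩
    have hjm : j ≤ m * g := by
      have := hj.length_le
      rw [List.length_drop, hlen] at this
      omega
    have hjg : j / g ≤ m := Nat.div_le_of_le_mul (by rwa [Nat.mul_comm])
    exact ⟨j / g, Nat.lt_succ_of_le hjg, eq_of_prefix_drop_of_lt_add hmin hper.2.1 (hocc _ hjg) hj
      (Nat.div_mul_le_self j g) (Nat.lt_div_mul_add hper.1)⟩
  · rintro ⟨i, hi, rfl⟩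
    refine ⟨?_, hocc i (by omega)⟩
    rw [hlen]
    have := Nat.mul_le_mul_right g (Nat.le_of_lt_succ hi)
    omega

theorem occurrences_in_run {α : Type*} [DecidableEq α] (u v q : List α) (g t k : ℕ)
    (hq : q = pow (u ++ v) t ++ u) (hg : g = (u ++ v).length)
    (ht : 2 ≤ t) (hv : v ≠ [])
    (hper : isPeriod q g) (hmin : ∀ g', isPeriod q g' → g ≤ g')
    (hk : t ≤ k) :
    occs q (pow (u ++ v) k ++ u) = (Finset.range (k - t + 1)).image (· * g) :=
  occurrences_in_run_general u v q g t k hq hg hper hmin hk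
end
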